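/- Completeness of the abduction-to-weak-constraints translation: for every optimal solution A of a PAP 𝒫 = ⟨H, P, O, γ⟩, there exists a best model M of the translated program lpw(𝒫) with M ∩ H = A. -/
import Mathlib


/-- A propositional logic-program rule `head :- pos, not neg`.
`head = none` represents a strong constraint (rule with empty head). -/
structure LPRule where
  head : Option ℕ
  pos : Finset ℕ
  neg : Finset ℕ
deriving DecidableEq

namespace LP

/-- Truth of a rule head w.r.t. an interpretation; an empty head is never true. -/
def headTrue (I : Set ℕ) : Option ℕ → Prop
  | none => False
  | some a => a ∈ I

/-- The body of a rule is true w.r.t. `I`. -/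
def bodyTrue (I : Set ℕ) (r : LPRule) : Prop :=
  (∀ b ∈ r.pos, b ∈ I) ∧ (∀ b ∈ r.neg, b ∉ I)

/-- `I` satisfies rule `r`. -/
def satRule (I : Set ℕ) (r : LPRule) : Prop := bodyTrue I r → headTrue I r.head

/-- `I` is a model of the program `P`. -/
def isModel (P : Set LPRule) (I : Set ℕ) : Prop := ∀ r ∈ P, satRule I r

/-- A positive (negation-free) program. -/
def isPositive (P : Set LPRule) : Prop := ∀ r ∈ P, r.neg = ∅

/-- A constraint-free program (no rules with empty head). -/
def constraintFree (P : Set LPRule) : Prop := ∀ r ∈ P, r.head ≠ none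

/-- The Gelfond-Lifschitz reduct `P^I`. -/
def reduct (P : Set LPRule) (I : Set ℕ) : Set LPRule :=
  (fun r => LPRule.mk r.head r.pos ∅) '' {r ∈ P | ∀ b ∈ r.neg, b ∉ I}

/-- `M` is the least model of `P`. -/
def isLeastModel (P : Set LPRule) (M : Set ℕ) : Prop :=
  isModel P M ∧ ∀ M', isModel P M' → M ⊆ M'

/-- `M` is a stable model of `P`: it is the least model of the reduct `P^M`. -/
def isStable (P : Set LPRule) (M : Set ℕ) : Prop := isLeastModel (reduct P M) M

/-- `facts S` is the set of facts `{p :- | p ∈ S}`. -/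
def facts (S : Set ℕ) : Set LPRule := (fun p => LPRule.mk (some p) ∅ ∅) '' S

/-- The atoms occurring in a rule. -/
def ruleAtoms (r : LPRule) : Set ℕ := {a | r.head = some a} ∪ ↑r.pos ∪ ↑r.neg

/-- The Herbrand base of a program: all atoms occurring in it. -/
def atoms (P : Set LPRule) : Set ℕ := ⋃ r ∈ P, ruleAtoms r

/-- `p` depends on `q`: some rule has head `p` and `q` in its body. -/
def dependsOn (P : Set LPRule) (p q : ℕ) : Prop :=
  ∃ r ∈ P, r.head = some p ∧ (q ∈ r.pos ∨ q ∈ r.neg)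

/-- `P` is stratified: no rule with head `p` and `not q` in the body where
`q` transitively depends on `p`. -/
def stratified (P : Set LPRule) : Prop :=
  ∀ r ∈ P, ∀ p, r.head = some p → ∀ q ∈ r.neg, ¬ Relation.TransGen (dependsOn P) q p

/-- Hypotheses `H` do not occur in rule heads of `P`. -/
def hypFree (P : Set LPRule) (H : Finset ℕ) : Prop :=
  ∀ r ∈ P, ∀ h ∈ H, r.head ≠ some h

/-- `S` is an admissible solution: `S ⊆ H` and some stable model of
`P ∪ facts S` makes all observations true. -/
def admissible (P : Set LPRule) (H obsP obsN : Finset ℕ) (S : Set ℕ) : Prop :=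
  S ⊆ ↑H ∧ ∃ M, isStable (P ∪ facts S) M ∧ (∀ o ∈ obsP, o ∈ M) ∧ (∀ o ∈ obsN, o ∉ M)

/-- `sum_γ`: total penalty of the hypotheses of `H` belonging to `S`. -/
noncomputable def cost (γ : ℕ → NNReal) (H : Finset ℕ) (S : Set ℕ) : NNReal :=
  ∑ h ∈ H, S.indicator γ h

/-- `S` is an optimal solution: admissible with minimal total penalty. -/
def optimal (P : Set LPRule) (H obsP obsN : Finset ℕ) (γ : ℕ → NNReal) (S : Set ℕ) : Prop :=
  admissible P H obsP obsN S ∧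
  ∀ S', admissible P H obsP obsN S' → cost γ H S ≤ cost γ H S'

end LP

namespace LP

/-- `P2` potentially uses `P1`: no head atom of `P2` occurs in `P1`. -/
def potentiallyUses (P2 P1 : Set LPRule) : Prop :=
  ∀ r ∈ P2, ∀ a, r.head = some a → a ∉ atoms P1

/-- The translated program `lpw(𝒫)`: the original program `P`, the guessing rules
`h :- sol h`, `sol h :- not nsol h`, `nsol h :- not sol h` for each hypothesis `h ∈ H`,
and the strong constraints `:- not a` (resp. `:- a`) for positive (resp. negative)
observations. -/
def lpw (P : Set LPRule) (H obsP obsN : Finset ℕ) (sol nsol : ℕ → ℕ) : Set LPRule :=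
  P ∪ (⋃ h ∈ (↑H : Set ℕ),
        {LPRule.mk (some h) {sol h} ∅,
         LPRule.mk (some (sol h)) ∅ {nsol h},
         LPRule.mk (some (nsol h)) ∅ {sol h}})
    ∪ ((fun a => LPRule.mk none ∅ {a}) '' ↑obsP)
    ∪ ((fun a => LPRule.mk none {a} ∅) '' ↑obsN)

/-- The atoms `sol h` and `nsol h` are pairwise distinct fresh atoms not occurring
in `P`, `H`, or among the observations. -/
def freshAtoms (P : Set LPRule) (H obsP obsN : Finset ℕ) (sol nsol : ℕ → ℕ) : Prop :=
  Function.Injective sol ∧ Function.Injective nsol ∧ (∀ h h', sol h ≠ nsol h') ∧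
  ∀ h ∈ H, sol h ∉ atoms P ∪ ↑H ∪ ↑obsP ∪ ↑obsN ∧
           nsol h ∉ atoms P ∪ ↑H ∪ ↑obsP ∪ ↑obsN

/-- The total weak-constraint penalty of a model `M`: the weak constraint `:~ h [γ(h)]`
is violated by `M` iff `h ∈ M`, so the penalty is the sum of `γ(h)` over `h ∈ H ∩ M`. -/
noncomputable def penalty (γ : ℕ → NNReal) (H : Finset ℕ) (M : Set ℕ) : NNReal :=
  cost γ H M

/-- `M` is a best model of the translated program: a stable model (which in particular
satisfies all strong constraints) minimizing the total weight of violated weak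
constraints. -/
def isBest (P : Set LPRule) (H obsP obsN : Finset ℕ) (γ : ℕ → NNReal)
    (sol nsol : ℕ → ℕ) (M : Set ℕ) : Prop :=
  isStable (lpw P H obsP obsN sol nsol) M ∧
  ∀ M', isStable (lpw P H obsP obsN sol nsol) M' → penalty γ H M ≤ penalty γ H M'

end LP

namespace LP

lemma mem_reduct_iff {Q : Set LPRule} {M : Set ℕ} {r' : LPRule} :
    r' ∈ reduct Q M ↔ ∃ r, r ∈ Q ∧ (∀ b ∈ r.neg, b ∉ M) ∧ r' = ⟨r.head, r.pos, ∅⟩ := by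
  constructor
  · rintro ⟨r, ⟨hr, hneg⟩, rfl⟩
    exact ⟨r, hr, hneg, rfl⟩
  · rintro ⟨r, hr, hneg, rfl⟩
    exact ⟨r, ⟨hr, hneg⟩, rfl⟩

lemma headTrue_mono {N N' : Set ℕ} (h : N ⊆ N') {o : Option ℕ} (ho : headTrue N o) :
    headTrue N' o := by
  cases o with
  | none => exact ho
  | some a => exact h ho

lemma isModel_reduct_iff {Q : Set LPRule} {M N : Set ℕ} :
    isModel (reduct Q M) N ↔
      ∀ r ∈ Q, (∀ b ∈ r.neg, b ∉ M) → (∀ b ∈ r.pos, b ∈ N) → headTrue N r.head := by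
  constructor
  · intro hm r hr hneg hpos
    exact hm ⟨r.head, r.pos, ∅⟩ (mem_reduct_iff.mpr ⟨r, hr, hneg, rfl⟩)
      ⟨hpos, by simp⟩
  · intro h r' hr'
    obtain ⟨r, hr, hneg, rfl⟩ := mem_reduct_iff.mp hr'
    intro hb
    exact h r hr hneg hb.1

lemma stable_supported {Q : Set LPRule} {M : Set ℕ} (hS : isStable Q M)
    {a : ℕ} (ha : a ∈ M) :
    ∃ r ∈ Q, r.head = some a ∧ (∀ b ∈ r.neg, b ∉ M) ∧ ∀ b ∈ r.pos, b ∈ M ∧ b ≠ a := by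
  by_contra hcon
  push_neg at hcon
  have hmod : isModel (reduct Q M) (M \ {a}) := by
    rw [isModel_reduct_iff]
    intro r hr hneg hpos
    have hpos' : ∀ b ∈ r.pos, b ∈ M := fun b hb => (hpos b hb).1
    have hhead := isModel_reduct_iff.mp hS.1 r hr hneg hpos'
    cases hh : r.head with
    | none => rw [hh] at hhead; exact hhead
    | some c =>
      rw [hh] at hhead
      refine ⟨hhead, fun hc => ?_⟩
      rw [Set.mem_singleton_iff] at hc
      subst hc
      obtain ⟨b, hb, hb2⟩ := hcon r hr hh hneg
      exact (hpos b hb).2 (hb2 (hpos b hb).1)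
  have := hS.2 _ hmod ha
  exact this.2 rfl

lemma head_mem_atoms {P : Set LPRule} {r : LPRule} (hr : r ∈ P) {a : ℕ}
    (ha : r.head = some a) : a ∈ atoms P := by
  refine Set.mem_biUnion hr ?_
  exact Or.inl (Or.inl ha)

lemma pos_mem_atoms {P : Set LPRule} {r : LPRule} (hr : r ∈ P) {a : ℕ}
    (ha : a ∈ r.pos) : a ∈ atoms P := by
  refine Set.mem_biUnion hr ?_
  exact Or.inl (Or.inr (by exact_mod_cast ha))

lemma neg_mem_atoms {P : Set LPRule} {r : LPRule} (hr : r ∈ P) {a : ℕ}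
    (ha : a ∈ r.neg) : a ∈ atoms P := by
  refine Set.mem_biUnion hr ?_
  exact Or.inr (by exact_mod_cast ha)

lemma mem_lpw_iff {P : Set LPRule} {H obsP obsN : Finset ℕ} {sol nsol : ℕ → ℕ}
    {r : LPRule} :
    r ∈ lpw P H obsP obsN sol nsol ↔
      r ∈ P ∨
      (∃ h ∈ H, r = ⟨some h, {sol h}, ∅⟩ ∨ r = ⟨some (sol h), ∅, {nsol h}⟩ ∨
        r = ⟨some (nsol h), ∅, {sol h}⟩) ∨
      (∃ a ∈ obsP, r = ⟨none, ∅, {a}⟩) ∨ (∃ a ∈ obsN, r = ⟨none, {a}, ∅⟩) := by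
  simp only [lpw, Set.mem_union, Set.mem_iUnion, Set.mem_image, Set.mem_insert_iff,
    Set.mem_singleton_iff, Finset.mem_coe, exists_prop]
  constructor
  · rintro (((h | ⟨h, hh, hr⟩) | ⟨a, ha, rfl⟩) | ⟨a, ha, rfl⟩)
    · exact Or.inl h
    · exact Or.inr (Or.inl ⟨h, hh, hr⟩)
    · exact Or.inr (Or.inr (Or.inl ⟨a, ha, rfl⟩))
    · exact Or.inr (Or.inr (Or.inr ⟨a, ha, rfl⟩))
  · rintro (h | ⟨h, hh, hr⟩ | ⟨a, ha, rfl⟩ | ⟨a, ha, rfl⟩)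
    · exact Or.inl (Or.inl (Or.inl h))
    · exact Or.inl (Or.inl (Or.inr ⟨h, hh, hr⟩))
    · exact Or.inl (Or.inr ⟨a, ha, rfl⟩)
    · exact Or.inr ⟨a, ha, rfl⟩

lemma cost_congr {γ : ℕ → NNReal} {H : Finset ℕ} {S S' : Set ℕ}
    (h : ∀ a ∈ H, a ∈ S ↔ a ∈ S') : cost γ H S = cost γ H S' := by
  unfold cost
  refine Finset.sum_congr rfl fun a ha => ?_
  by_cases hs : a ∈ S
  · rw [Set.indicator_of_mem hs, Set.indicator_of_mem ((h a ha).mp hs)]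
  · rw [Set.indicator_of_notMem hs,
      Set.indicator_of_notMem (fun hx => hs ((h a ha).mpr hx))]

lemma mem4_1 {s t u v : Set ℕ} {a : ℕ} (h : a ∈ s) : a ∈ s ∪ t ∪ u ∪ v :=
  Or.inl (Or.inl (Or.inl h))

lemma mem4_2 {s t u v : Set ℕ} {a : ℕ} (h : a ∈ t) : a ∈ s ∪ t ∪ u ∪ v :=
  Or.inl (Or.inl (Or.inr h))

lemma mem4_3 {s t u v : Set ℕ} {a : ℕ} (h : a ∈ u) : a ∈ s ∪ t ∪ u ∪ v :=
  Or.inl (Or.inr h)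

lemma mem4_4 {s t u v : Set ℕ} {a : ℕ} (h : a ∈ v) : a ∈ s ∪ t ∪ u ∪ v :=
  Or.inr h

lemma construct_stable
    (P : Set LPRule) (H obsP obsN : Finset ℕ) (sol nsol : ℕ → ℕ)
    (hHyp : hypFree P H) (hFresh : freshAtoms P H obsP obsN sol nsol)
    (A : Set ℕ) (hA : A ⊆ ↑H) (M : Set ℕ)
    (hM : isStable (P ∪ facts A) M)
    (hoP : ∀ o ∈ obsP, o ∈ M) (hoN : ∀ o ∈ obsN, o ∉ M) :
    isStable (lpw P H obsP obsN sol nsol)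
      (M ∪ sol '' A ∪ nsol '' ((↑H : Set ℕ) \ A)) ∧
    (M ∪ sol '' A ∪ nsol '' ((↑H : Set ℕ) \ A)) ∩ ↑H = A := by
  obtain ⟨hsolinj, hnsolinj, hsn, hfresh⟩ := hFresh
  set M' := M ∪ sol '' A ∪ nsol '' ((↑H : Set ℕ) \ A) with hM'def
  have hMatoms : ∀ a ∈ M, a ∈ atoms P ∨ a ∈ A := by
    intro a ha
    obtain ⟨r, hr, hhead, -, -⟩ := stable_supported hM ha
    rcases hr with hr | hr
    · exact Or.inl (head_mem_atoms hr hhead)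
    · obtain ⟨p, hp, rfl⟩ := hr
      simp only [Option.some.injEq] at hhead
      exact Or.inr (hhead ▸ hp)
  have hsolnM : ∀ h ∈ H, sol h ∉ M := by
    intro h hh hx
    rcases hMatoms _ hx with h1 | h1
    · exact (hfresh h hh).1 (mem4_1 h1)
    · exact (hfresh h hh).1 (mem4_2 (hA h1))
  have hnsolnM : ∀ h ∈ H, nsol h ∉ M := by
    intro h hh hx
    rcases hMatoms _ hx with h1 | h1
    · exact (hfresh h hh).2 (mem4_1 h1)
    · exact (hfresh h hh).2 (mem4_2 (hA h1))
  have hMH : M ∩ ↑H = A := by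
    apply Set.Subset.antisymm
    · rintro a ⟨haM, haH⟩
      obtain ⟨r, hr, hhead, -, -⟩ := stable_supported hM haM
      rcases hr with hr | hr
      · exact absurd hhead (hHyp r hr a (Finset.mem_coe.mp haH))
      · obtain ⟨p, hp, rfl⟩ := hr
        simp only [Option.some.injEq] at hhead
        exact hhead ▸ hp
    · intro a haA
      refine ⟨?_, hA haA⟩
      exact isModel_reduct_iff.mp hM.1 ⟨some a, ∅, ∅⟩ (Or.inr ⟨a, haA, rfl⟩)
        (by intro b hb; simp at hb) (by intro b hb; simp at hb)
  have hmem : ∀ b, b ∈ M' ↔ b ∈ M ∨ (∃ h, h ∈ A ∧ b = sol h) ∨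
      (∃ h, h ∈ (↑H : Set ℕ) ∧ h ∉ A ∧ b = nsol h) := by
    intro b
    simp only [hM'def, Set.mem_union, Set.mem_image, Set.mem_diff]
    constructor
    · rintro ((h | ⟨x, hx, rfl⟩) | ⟨x, ⟨hx1, hx2⟩, rfl⟩)
      · exact Or.inl h
      · exact Or.inr (Or.inl ⟨x, hx, rfl⟩)
      · exact Or.inr (Or.inr ⟨x, hx1, hx2, rfl⟩)
    · rintro (h | ⟨x, hx, rfl⟩ | ⟨x, hx1, hx2, rfl⟩)
      · exact Or.inl (Or.inl h)
      · exact Or.inl (Or.inr ⟨x, hx, rfl⟩)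
      · exact Or.inr ⟨x, ⟨hx1, hx2⟩, rfl⟩
  have hMsub : M ⊆ M' := fun b hb => (hmem b).mpr (Or.inl hb)
  have hsolM' : ∀ h ∈ H, (sol h ∈ M' ↔ h ∈ A) := by
    intro h hh
    constructor
    · intro hx
      rcases (hmem _).mp hx with h1 | ⟨x, hx1, he⟩ | ⟨x, hx1, hx2, he⟩
      · exact absurd h1 (hsolnM h hh)
      · exact (hsolinj he).symm ▸ hx1
      · exact absurd he (hsn h x)
    · intro h1
      exact (hmem _).mpr (Or.inr (Or.inl ⟨h, h1, rfl⟩))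
  have hnsolM' : ∀ h ∈ H, (nsol h ∈ M' ↔ h ∉ A) := by
    intro h hh
    constructor
    · intro hx
      rcases (hmem _).mp hx with h1 | ⟨x, hx1, he⟩ | ⟨x, hx1, hx2, he⟩
      · exact absurd h1 (hnsolnM h hh)
      · exact absurd he.symm (hsn x h)
      · exact (hnsolinj he).symm ▸ hx2
    · intro h1
      exact (hmem _).mpr (Or.inr (Or.inr ⟨h, Finset.mem_coe.mpr hh, h1, rfl⟩))
  have hag : ∀ b ∈ atoms P ∪ (↑H : Set ℕ) ∪ ↑obsP ∪ ↑obsN, (b ∈ M' ↔ b ∈ M) := by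
    intro b hb
    constructor
    · intro hx
      rcases (hmem b).mp hx with h1 | ⟨x, hx1, rfl⟩ | ⟨x, hx1, hx2, rfl⟩
      · exact h1
      · exact absurd hb (hfresh x (Finset.mem_coe.mp (hA hx1))).1
      · exact absurd hb (hfresh x (Finset.mem_coe.mp hx1)).2
    · exact fun h1 => hMsub h1
  have hmodel : isModel (reduct (lpw P H obsP obsN sol nsol) M') M' := by
    rw [isModel_reduct_iff]
    intro r hr hneg hpos
    rcases mem_lpw_iff.mp hr with hrP | ⟨h, hh, hg⟩ | ⟨a, ha, rfl⟩ | ⟨a, ha, rfl⟩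
    · have hneg' : ∀ b ∈ r.neg, b ∉ M := fun b hb hbM => hneg b hb (hMsub hbM)
      have hpos' : ∀ b ∈ r.pos, b ∈ M := fun b hb =>
        (hag b (mem4_1 (pos_mem_atoms hrP hb))).mp (hpos b hb)
      exact headTrue_mono hMsub
        (isModel_reduct_iff.mp hM.1 r (Or.inl hrP) hneg' hpos')
    · rcases hg with rfl | rfl | rfl
      · have hsh : sol h ∈ M' := hpos (sol h) (Finset.mem_singleton_self _)
        have hhA : h ∈ A := (hsolM' h hh).mp hsh
        show h ∈ M'
        have : h ∈ M := by rw [← hMH] at hhA; exact hhA.1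
        exact hMsub this
      · have hx : nsol h ∉ M' := hneg (nsol h) (Finset.mem_singleton_self _)
        have hhA : h ∈ A := by
          by_contra hc
          exact hx ((hnsolM' h hh).mpr hc)
        show sol h ∈ M'
        exact (hsolM' h hh).mpr hhA
      · have hx : sol h ∉ M' := hneg (sol h) (Finset.mem_singleton_self _)
        have hhA : h ∉ A := fun hc => hx ((hsolM' h hh).mpr hc)
        show nsol h ∈ M'
        exact (hnsolM' h hh).mpr hhA
    · exact absurd (hMsub (hoP a ha)) (hneg a (Finset.mem_singleton_self _))
    · have haM' : a ∈ M' := hpos a (Finset.mem_singleton_self _)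
      exact absurd ((hag a (mem4_4 (Finset.mem_coe.mpr ha))).mp haM') (hoN a ha)
  have hleast : ∀ N, isModel (reduct (lpw P H obsP obsN sol nsol) M') N → M' ⊆ N := by
    intro N hN
    rw [isModel_reduct_iff] at hN
    have hsolN : ∀ h ∈ A, sol h ∈ N := by
      intro h hhA
      have hh : h ∈ H := Finset.mem_coe.mp (hA hhA)
      exact hN ⟨some (sol h), ∅, {nsol h}⟩
        (mem_lpw_iff.mpr (Or.inr (Or.inl ⟨h, hh, Or.inr (Or.inl rfl)⟩)))
        (by intro b hb; rw [Finset.mem_singleton] at hb; subst hb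
            exact fun hx => ((hnsolM' h hh).mp hx) hhA)
        (by intro b hb; simp at hb)
    have hnsolN : ∀ h, h ∈ (↑H : Set ℕ) → h ∉ A → nsol h ∈ N := by
      intro h hhH hhA
      have hh : h ∈ H := Finset.mem_coe.mp hhH
      exact hN ⟨some (nsol h), ∅, {sol h}⟩
        (mem_lpw_iff.mpr (Or.inr (Or.inl ⟨h, hh, Or.inr (Or.inr rfl)⟩)))
        (by intro b hb; rw [Finset.mem_singleton] at hb; subst hb
            exact fun hx => hhA ((hsolM' h hh).mp hx))
        (by intro b hb; simp at hb)
    have hNmod : isModel (reduct (P ∪ facts A) M) N := by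
      rw [isModel_reduct_iff]
      intro r hr hneg hpos
      rcases hr with hrP | hrF
      · refine hN r (mem_lpw_iff.mpr (Or.inl hrP)) ?_ hpos
        intro b hb hbM'
        exact hneg b hb ((hag b (mem4_1 (neg_mem_atoms hrP hb))).mp hbM')
      · obtain ⟨p, hp, rfl⟩ := hrF
        have hh : p ∈ H := Finset.mem_coe.mp (hA hp)
        exact hN ⟨some p, {sol p}, ∅⟩
          (mem_lpw_iff.mpr (Or.inr (Or.inl ⟨p, hh, Or.inl rfl⟩)))
          (by intro b hb; simp at hb)
          (by intro b hb; rw [Finset.mem_singleton] at hb; subst hb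
              exact hsolN p hp)
    have hMN : M ⊆ N := hM.2 N hNmod
    intro b hb
    rcases (hmem b).mp hb with h1 | ⟨x, hx, rfl⟩ | ⟨x, hx1, hx2, rfl⟩
    · exact hMN h1
    · exact hsolN x hx
    · exact hnsolN x hx1 hx2
  have hM'H : M' ∩ ↑H = A := by
    apply Set.Subset.antisymm
    · rintro b ⟨hbM', hbH⟩
      rcases (hmem b).mp hbM' with h1 | ⟨x, hx, rfl⟩ | ⟨x, hx1, hx2, rfl⟩
      · rw [← hMH]; exact ⟨h1, hbH⟩
      · exact absurd hbH (fun hc => (hfresh x (Finset.mem_coe.mp (hA hx))).1 (mem4_2 hc))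
      · exact absurd hbH (fun hc => (hfresh x (Finset.mem_coe.mp hx1)).2 (mem4_2 hc))
    · intro a haA
      refine ⟨hMsub ?_, hA haA⟩
      rw [← hMH] at haA; exact haA.1
  exact ⟨⟨hmodel, hleast⟩, hM'H⟩

lemma stable_lpw_admissible
    (P : Set LPRule) (H obsP obsN : Finset ℕ) (sol nsol : ℕ → ℕ)
    (hHyp : hypFree P H) (hFresh : freshAtoms P H obsP obsN sol nsol)
    (M : Set ℕ) (hM : isStable (lpw P H obsP obsN sol nsol) M) :
    admissible P H obsP obsN (M ∩ ↑H) := by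
  obtain ⟨hsolinj, hnsolinj, hsn, hfresh⟩ := hFresh
  have hoP : ∀ a ∈ obsP, a ∈ M := by
    intro a ha
    by_contra hc
    exact isModel_reduct_iff.mp hM.1 ⟨none, ∅, {a}⟩
      (mem_lpw_iff.mpr (Or.inr (Or.inr (Or.inl ⟨a, ha, rfl⟩))))
      (by intro b hb; rw [Finset.mem_singleton] at hb; subst hb; exact hc)
      (by intro b hb; simp at hb)
  have hoN : ∀ a ∈ obsN, a ∉ M := by
    intro a ha hc
    exact isModel_reduct_iff.mp hM.1 ⟨none, {a}, ∅⟩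
      (mem_lpw_iff.mpr (Or.inr (Or.inr (Or.inr ⟨a, ha, rfl⟩))))
      (by intro b hb; simp at hb)
      (by intro b hb; rw [Finset.mem_singleton] at hb; subst hb; exact hc)
  have hsol_of_not_nsol : ∀ h ∈ H, nsol h ∉ M → sol h ∈ M := by
    intro h hh hn
    exact isModel_reduct_iff.mp hM.1 ⟨some (sol h), ∅, {nsol h}⟩
      (mem_lpw_iff.mpr (Or.inr (Or.inl ⟨h, hh, Or.inr (Or.inl rfl)⟩)))
      (by intro b hb; rw [Finset.mem_singleton] at hb; subst hb; exact hn)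
      (by intro b hb; simp at hb)
  have h_of_sol : ∀ h ∈ H, sol h ∈ M → h ∈ M := by
    intro h hh hs
    exact isModel_reduct_iff.mp hM.1 ⟨some h, {sol h}, ∅⟩
      (mem_lpw_iff.mpr (Or.inr (Or.inl ⟨h, hh, Or.inl rfl⟩)))
      (by intro b hb; simp at hb)
      (by intro b hb; rw [Finset.mem_singleton] at hb; subst hb; exact hs)
  have hnsol_not_sol : ∀ h ∈ H, sol h ∈ M → nsol h ∉ M := by
    intro h hh hs
    obtain ⟨r, hr, hhead, hneg, -⟩ := stable_supported hM hs
    rcases mem_lpw_iff.mp hr with hrP | ⟨h', hh', hg⟩ | ⟨a, ha, rfl⟩ | ⟨a, ha, rfl⟩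
    · exact absurd (head_mem_atoms hrP hhead)
        (fun hx => (hfresh h hh).1 (mem4_1 hx))
    · rcases hg with rfl | rfl | rfl
      · simp only [Option.some.injEq] at hhead
        exact absurd (hhead ▸ Finset.mem_coe.mpr hh')
          (fun hx => (hfresh h hh).1 (mem4_2 hx))
      · simp only [Option.some.injEq] at hhead
        have hx := hsolinj hhead
        subst hx
        exact hneg (nsol h') (Finset.mem_singleton_self _)
      · simp only [Option.some.injEq] at hhead
        exact absurd hhead.symm (hsn h h')
    · simp at hhead
    · simp at hhead
  have hsol_of_h : ∀ h ∈ H, h ∈ M → sol h ∈ M := by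
    intro h hh hhM
    obtain ⟨r, hr, hhead, -, hpos⟩ := stable_supported hM hhM
    rcases mem_lpw_iff.mp hr with hrP | ⟨h', hh', hg⟩ | ⟨a, ha, rfl⟩ | ⟨a, ha, rfl⟩
    · exact absurd hhead (hHyp r hrP h hh)
    · rcases hg with rfl | rfl | rfl
      · simp only [Option.some.injEq] at hhead
        subst hhead
        exact (hpos (sol h') (Finset.mem_singleton_self _)).1
      · simp only [Option.some.injEq] at hhead
        exact absurd (hhead ▸ Finset.mem_coe.mpr hh)
          (fun hx => (hfresh h' hh').1 (mem4_2 hx))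
      · simp only [Option.some.injEq] at hhead
        exact absurd (hhead ▸ Finset.mem_coe.mpr hh)
          (fun hx => (hfresh h' hh').2 (mem4_2 hx))
    · simp at hhead
    · simp at hhead
  have hiff : ∀ h ∈ H, (h ∈ M ↔ nsol h ∉ M) := by
    intro h hh
    exact ⟨fun h1 => hnsol_not_sol h hh (hsol_of_h h hh h1),
      fun h1 => h_of_sol h hh (hsol_of_not_nsol h hh h1)⟩
  set S := M ∩ (↑H : Set ℕ) with hSdef
  set M₀ := {a ∈ M | ∀ h ∈ H, a ≠ sol h ∧ a ≠ nsol h} with hM₀def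
  have hM₀sub : M₀ ⊆ M := fun a ha => ha.1
  have hSsubM₀ : S ⊆ M₀ := by
    rintro a ⟨haM, haH⟩
    refine ⟨haM, fun h hh => ⟨fun he => ?_, fun he => ?_⟩⟩
    · exact (hfresh h hh).1 (mem4_2 (he ▸ haH))
    · exact (hfresh h hh).2 (mem4_2 (he ▸ haH))
  have hatomsM₀ : ∀ b ∈ atoms P, (b ∈ M₀ ↔ b ∈ M) := by
    intro b hb
    refine ⟨fun h1 => h1.1, fun h1 => ⟨h1, fun h hh => ⟨fun he => ?_, fun he => ?_⟩⟩⟩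
    · exact (hfresh h hh).1 (mem4_1 (he ▸ hb))
    · exact (hfresh h hh).2 (mem4_1 (he ▸ hb))
  have hobsPM₀ : ∀ a ∈ obsP, a ∈ M₀ := by
    intro a ha
    refine ⟨hoP a ha, fun h hh => ⟨fun he => ?_, fun he => ?_⟩⟩
    · exact (hfresh h hh).1 (mem4_3 (he ▸ Finset.mem_coe.mpr ha))
    · exact (hfresh h hh).2 (mem4_3 (he ▸ Finset.mem_coe.mpr ha))
  have hM₀model : isModel (reduct (P ∪ facts S) M₀) M₀ := by
    rw [isModel_reduct_iff]
    intro r hr hneg hpos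
    rcases hr with hrP | hrF
    · have hneg' : ∀ b ∈ r.neg, b ∉ M := fun b hb hbM =>
        hneg b hb ((hatomsM₀ b (neg_mem_atoms hrP hb)).mpr hbM)
      have hpos' : ∀ b ∈ r.pos, b ∈ M := fun b hb => (hpos b hb).1
      have hhd := isModel_reduct_iff.mp hM.1 r (mem_lpw_iff.mpr (Or.inl hrP))
        hneg' hpos'
      cases hh : r.head with
      | none => rw [hh] at hhd; exact hhd
      | some c =>
        rw [hh] at hhd
        show c ∈ M₀
        exact (hatomsM₀ c (head_mem_atoms hrP hh)).mpr hhd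
    · obtain ⟨p, hp, rfl⟩ := hrF
      exact hSsubM₀ hp
  have hM₀least : ∀ N, isModel (reduct (P ∪ facts S) M₀) N → M₀ ⊆ N := by
    intro N hN
    set N₁ := N ∩ M₀ with hN₁def
    have hN₁ : isModel (reduct (P ∪ facts S) M₀) N₁ := by
      rw [isModel_reduct_iff]
      intro r hr hneg hpos
      have h1 := isModel_reduct_iff.mp hN r hr hneg (fun b hb => (hpos b hb).1)
      have h2 := isModel_reduct_iff.mp hM₀model r hr hneg (fun b hb => (hpos b hb).2)
      cases hh : r.head with
      | none => rw [hh] at h1; exact h1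
      | some c =>
        rw [hh] at h1 h2
        exact ⟨h1, h2⟩
    have hSN : S ⊆ N₁ := by
      intro s hs
      exact isModel_reduct_iff.mp hN₁ ⟨some s, ∅, ∅⟩ (Or.inr ⟨s, hs, rfl⟩)
        (by intro b hb; simp at hb) (by intro b hb; simp at hb)
    have hMsubN' : M ⊆ N₁ ∪ sol '' S ∪ nsol '' ((↑H : Set ℕ) \ S) := by
      apply hM.2
      rw [isModel_reduct_iff]
      intro r hr hneg hpos
      rcases mem_lpw_iff.mp hr with hrP | ⟨h, hh, hg⟩ | ⟨a, ha, rfl⟩ | ⟨a, ha, rfl⟩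
      · have hneg' : ∀ b ∈ r.neg, b ∉ M₀ := fun b hb hbM₀ => hneg b hb (hM₀sub hbM₀)
        have hpos' : ∀ b ∈ r.pos, b ∈ N₁ := by
          intro b hb
          rcases hpos b hb with (h1 | h1) | h1
          · exact h1
          · obtain ⟨x, hx, rfl⟩ := h1
            exact absurd (mem4_1 (pos_mem_atoms hrP hb))
              (hfresh x (Finset.mem_coe.mp hx.2)).1
          · obtain ⟨x, hx, rfl⟩ := h1
            exact absurd (mem4_1 (pos_mem_atoms hrP hb))
              (hfresh x (Finset.mem_coe.mp hx.1)).2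
        exact headTrue_mono (fun z hz => Or.inl (Or.inl hz))
          (isModel_reduct_iff.mp hN₁ r (Or.inl hrP) hneg' hpos')
      · rcases hg with rfl | rfl | rfl
        · have hs := hpos (sol h) (Finset.mem_singleton_self _)
          have hhS : h ∈ S := by
            rcases hs with (h1 | h1) | h1
            · exact absurd rfl ((h1.2.2 h hh).1)
            · obtain ⟨x, hx, he⟩ := h1
              exact (hsolinj he) ▸ hx
            · obtain ⟨x, hx, he⟩ := h1
              exact absurd he.symm (hsn h x)
          show h ∈ N₁ ∪ sol '' S ∪ nsol '' ((↑H : Set ℕ) \ S)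
          exact Or.inl (Or.inl (hSN hhS))
        · have hn : nsol h ∉ M := hneg (nsol h) (Finset.mem_singleton_self _)
          have hhM : h ∈ M := (hiff h hh).mpr hn
          show sol h ∈ N₁ ∪ sol '' S ∪ nsol '' ((↑H : Set ℕ) \ S)
          exact Or.inl (Or.inr ⟨h, ⟨hhM, Finset.mem_coe.mpr hh⟩, rfl⟩)
        · have hs : sol h ∉ M := hneg (sol h) (Finset.mem_singleton_self _)
          have hhM : h ∉ M := fun hc => hs (hsol_of_h h hh hc)
          show nsol h ∈ N₁ ∪ sol '' S ∪ nsol '' ((↑H : Set ℕ) \ S)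
          exact Or.inr ⟨h, ⟨Finset.mem_coe.mpr hh, fun hc => hhM hc.1⟩, rfl⟩
      · exact absurd (hoP a ha) (hneg a (Finset.mem_singleton_self _))
      · have hx := hpos a (Finset.mem_singleton_self _)
        rcases hx with (h1 | h1) | h1
        · exact hoN a ha (hM₀sub h1.2)
        · obtain ⟨x, hxx, rfl⟩ := h1
          exact (hfresh x (Finset.mem_coe.mp hxx.2)).1 (mem4_4 (Finset.mem_coe.mpr ha))
        · obtain ⟨x, hxx, rfl⟩ := h1
          exact (hfresh x (Finset.mem_coe.mp hxx.1)).2 (mem4_4 (Finset.mem_coe.mpr ha))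
    intro b hb
    rcases hMsubN' (hM₀sub hb) with (h1 | h1) | h1
    · exact h1.1
    · obtain ⟨x, hx, he⟩ := h1
      exact absurd he.symm ((hb.2 x (Finset.mem_coe.mp hx.2)).1)
    · obtain ⟨x, hx, he⟩ := h1
      exact absurd he.symm ((hb.2 x (Finset.mem_coe.mp hx.1)).2)
  exact ⟨fun a ha => ha.2, M₀, ⟨hM₀model, hM₀least⟩,
    fun o ho => hobsPM₀ o ho, fun o ho hc => hoN o ho (hM₀sub hc)⟩

end LP

/-- completeness: for every optimal solution `A` of the PAP `𝒫`,
there is a best model `M` of `lpw(𝒫)` with `M ∩ H = A`. -/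
theorem lpw_completeness (P : Set LPRule) (hFin : P.Finite)
    (H obsP obsN : Finset ℕ) (γ : ℕ → NNReal) (sol nsol : ℕ → ℕ)
    (hHyp : LP.hypFree P H) (hFresh : LP.freshAtoms P H obsP obsN sol nsol)
    (A : Set ℕ) (hOpt : LP.optimal P H obsP obsN γ A) :
    ∃ M, LP.isBest P H obsP obsN γ sol nsol M ∧ M ∩ ↑H = A := by
  obtain ⟨⟨hAsub, M₀, hM₀, hoP, hoN⟩, hmin⟩ := hOpt
  obtain ⟨hst, hMH⟩ := LP.construct_stable P H obsP obsN sol nsol hHyp hFresh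
    A hAsub M₀ hM₀ hoP hoN
  refine ⟨_, ⟨hst, ?_⟩, hMH⟩
  intro M'' hM''
  have hadm := LP.stable_lpw_admissible P H obsP obsN sol nsol hHyp hFresh M'' hM''
  have h1 : LP.penalty γ H (M₀ ∪ sol '' A ∪ nsol '' ((↑H : Set ℕ) \ A)) =
      LP.cost γ H A := by
    refine LP.cost_congr fun a ha => ?_
    constructor
    · intro hx
      rw [← hMH]
      exact ⟨hx, Finset.mem_coe.mpr ha⟩
    · intro hx
      rw [← hMH] at hx
      exact hx.1
  have h2 : LP.penalty γ H M'' = LP.cost γ H (M'' ∩ ↑H) := by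
    refine LP.cost_congr fun a ha => ?_
    exact ⟨fun hx => ⟨hx, Finset.mem_coe.mpr ha⟩, fun hx => hx.1⟩
  rw [h1, h2]
  exact hmin _ hadm
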